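/- For all integers n and m, the concatenation γₙ·γₘ of the standard winding loops in C₅ is A-homotopic to γₙ₊ₘ. -/

import Mathlib

/-- A graph homomorphism in the A-homotopy sense: adjacent vertices map to
equal or adjacent vertices. -/
def IsGraphHom {V W : Type*} (G : SimpleGraph V) (H : SimpleGraph W) (f : V → W) : Prop :=
  ∀ ⦃u v : V⦄, G.Adj u v → f u = f v ∨ H.Adj (f u) (f v)

/-- The infinite path graph `I_∞` on `ℤ`. -/
def pathGraphZ : SimpleGraph ℤ where
  Adj i j := i ≠ j ∧ (j = i + 1 ∨ i = j + 1)
  symm := ⟨fun i j h => ⟨h.1.symm, h.2.symm⟩⟩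
  loopless := ⟨fun i h => h.1 rfl⟩

/-- The Cartesian (box) product `I_∞ □ I_∞` on `ℤ × ℤ`. -/
def gridGraphZ : SimpleGraph (ℤ × ℤ) where
  Adj p q := p ≠ q ∧ ((p.1 = q.1 ∧ pathGraphZ.Adj p.2 q.2) ∨ (p.2 = q.2 ∧ pathGraphZ.Adj p.1 q.1))
  symm := ⟨fun p q h =>
    ⟨h.1.symm, h.2.imp (fun hc => ⟨hc.1.symm, hc.2.symm⟩) (fun hc => ⟨hc.1.symm, hc.2.symm⟩)⟩⟩
  loopless := ⟨fun p h => h.1 rfl⟩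

/-- The Cartesian product `G □ I_∞` on `V × ℤ`. -/
def boxZ {V : Type*} (G : SimpleGraph V) : SimpleGraph (V × ℤ) where
  Adj p q := p ≠ q ∧ ((p.1 = q.1 ∧ pathGraphZ.Adj p.2 q.2) ∨ (p.2 = q.2 ∧ G.Adj p.1 q.1))
  symm := ⟨fun p q h =>
    ⟨h.1.symm, h.2.imp (fun hc => ⟨hc.1.symm, hc.2.symm⟩) (fun hc => ⟨hc.1.symm, hc.2.symm⟩)⟩⟩
  loopless := ⟨fun p h => h.1 rfl⟩

/-- The cycle graph `C_n` on `ZMod n`. -/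
def cycleGraph (n : ℕ) : SimpleGraph (ZMod n) where
  Adj a b := a ≠ b ∧ (a = b + 1 ∨ b = a + 1)
  symm := ⟨fun a b h => ⟨h.1.symm, h.2.symm⟩⟩
  loopless := ⟨fun a h => h.1 rfl⟩

/-- The one-vertex graph `*`. -/
def oneVertexGraph : SimpleGraph Unit := ⊥

/-- `f` is constant on integers `≤ m`. -/
def IsStabNegAt {V : Type*} (f : ℤ → V) (m : ℤ) : Prop := ∀ i ≤ m, f i = f m

/-- `f` is constant on integers `≥ m`. -/
def IsStabPosAt {V : Type*} (f : ℤ → V) (m : ℤ) : Prop := ∀ i, m ≤ i → f i = f m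

/-- `m` is the greatest integer below which `f` is constant: `m = m₀(f,-1)`. -/
def M0Neg {V : Type*} (f : ℤ → V) (m : ℤ) : Prop :=
  IsStabNegAt f m ∧ ∀ m', IsStabNegAt f m' → m' ≤ m

/-- `m` is the least integer above which `f` is constant: `m = m₀(f,+1)`. -/
def M0Pos {V : Type*} (f : ℤ → V) (m : ℤ) : Prop :=
  IsStabPosAt f m ∧ ∀ m', IsStabPosAt f m' → m ≤ m'

/-- A stable graph homomorphism `I_∞ → G`. -/
def StableHomZ {V : Type*} (G : SimpleGraph V) (f : ℤ → V) : Prop :=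
  IsGraphHom pathGraphZ G f ∧ (∃ m, IsStabNegAt f m) ∧ (∃ m, IsStabPosAt f m)

/-- The A-homotopy relation of Babson et al. on stable maps `I_∞ → G`:
`f` and `g` share their end values `vneg`, `vpos`, and there is a stable graph
homomorphism `H : I_∞² → G` stabilizing in the first axis to the constant end
values and to `f` (resp. `g`) in the negative (resp. positive) second direction. -/
def AHomotopicZ {V : Type*} (G : SimpleGraph V) (f g : ℤ → V) : Prop :=
  ∃ (vneg vpos : V) (H : ℤ × ℤ → V), IsGraphHom gridGraphZ G H ∧
    (∃ m, ∀ i ≤ m, f i = vneg ∧ g i = vneg) ∧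
    (∃ m, ∀ i, m ≤ i → f i = vpos ∧ g i = vpos) ∧
    (∃ m, ∀ a ≤ m, ∀ j : ℤ, H (a, j) = vneg) ∧
    (∃ m, ∀ a, m ≤ a → ∀ j : ℤ, H (a, j) = vpos) ∧
    (∃ m, ∀ j ≤ m, ∀ a : ℤ, H (a, j) = f a) ∧
    (∃ m, ∀ j, m ≤ j → ∀ a : ℤ, H (a, j) = g a)

/-- A-homotopy of graph homomorphisms `G → H` via a finite cylinder `G □ I_n`
(encoded as a homotopy on `G □ I_∞` that is constantly `f` for times `≤ 0` and
constantly `g` for times `≥ n`). -/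
def AHomotopicFin {V W : Type*} (G : SimpleGraph V) (H : SimpleGraph W) (f g : V → W) : Prop :=
  ∃ (n : ℕ) (Φ : V × ℤ → W), IsGraphHom (boxZ G) H Φ ∧
    (∀ v : V, ∀ i ≤ (0 : ℤ), Φ (v, i) = f v) ∧
    (∀ v : V, ∀ i : ℤ, (n : ℤ) ≤ i → Φ (v, i) = g v)

/-- Based A-homotopy: as `AHomotopicFin`, additionally fixing the base vertex
`v0 ↦ w0` at all times. -/
def AHomotopicBased {V W : Type*} (G : SimpleGraph V) (H : SimpleGraph W)
    (v0 : V) (w0 : W) (f g : V → W) : Prop :=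
  ∃ (n : ℕ) (Φ : V × ℤ → W), IsGraphHom (boxZ G) H Φ ∧
    (∀ v : V, ∀ i ≤ (0 : ℤ), Φ (v, i) = f v) ∧
    (∀ v : V, ∀ i : ℤ, (n : ℤ) ≤ i → Φ (v, i) = g v) ∧
    (∀ i : ℤ, Φ (v0, i) = w0)

/-- Concatenation `f · g`, where `mf = m₀(f,-1)` and `mg = m₀(g,+1)`. -/
def concatZ {V : Type*} (f g : ℤ → V) (mf mg : ℤ) : ℤ → V :=
  fun a => if 0 ≤ a then f (a + mf) else g (a + mg)

/-- The closed neighborhood `N[v]`. -/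
def nbhd {V : Type*} (G : SimpleGraph V) (v : V) : Set V := {u | u = v ∨ G.Adj u v}

/-- A covering graph map: a surjective local isomorphism. -/
def IsCoveringMap' {V W : Type*} (Gt : SimpleGraph V) (G : SimpleGraph W) (p : V → W) : Prop :=
  IsGraphHom Gt G p ∧ Function.Surjective p ∧
    ∀ w : V, Set.BijOn p (nbhd Gt w) (nbhd G (p w))

/-- A based loop in `B₁(G, x₀)`: a graph homomorphism `I_∞ → G` equal to `x₀`
outside a finite region. -/
def IsLoopAt {V : Type*} (G : SimpleGraph V) (x0 : V) (γ : ℤ → V) : Prop :=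
  IsGraphHom pathGraphZ G γ ∧ ∃ a b : ℤ, ∀ i : ℤ, (i < a ∨ b < i) → γ i = x0

/-- The 5-cycle. -/
def C5 : SimpleGraph (ZMod 5) := cycleGraph 5

/-- The covering map `p₅ : I_∞ → C₅`, reduction mod 5. -/
def p5 : ℤ → ZMod 5 := fun i => (i : ZMod 5)

/-- The standard loop `γ_n` winding `n` times around `C₅`. -/
def gammaC5 (n : ℤ) : ℤ → ZMod 5 := fun i =>
  if 0 ≤ n then (if i ≤ 0 then 0 else if i ≤ 5 * n then (i : ZMod 5) else 0)
  else (if i ≤ 0 then 0 else if i ≤ -(5 * n) then ((-i : ℤ) : ZMod 5) else 0)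

/-- The standard lift `γ̃_n : I_∞ → I_∞` of `γ_n`, starting at `0` and ending at `5n`. -/
def gammaLift (n : ℤ) : ℤ → ℤ := fun i =>
  if i ≤ 0 then 0 else if i ≤ 5 * |n| then (if 0 ≤ n then i else -i) else 5 * n


/-!
Reduction mod 5 is a graph map `I_∞ → C₅` under which the lift `gammaLift k` maps to `γₖ`,
and `γₙ · γₘ` lifts to the concatenation of `gammaLift n` shifted by `5m` with `gammaLift m`.
Both lifts run from `0` to `5(n+m)`, so the problem reduces to `I_∞`, where any two stable maps
with the same end values are A-homotopic: at time `j`, move `f a` towards `g a` by at most `j`.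
This clamped homotopy changes by at most one along each axis, and images of A-homotopies under
graph maps are A-homotopies.
-/

lemma pathGraphZ_adj_iff {i j : ℤ} : pathGraphZ.Adj i j ↔ j = i + 1 ∨ i = j + 1 := by
  simp only [pathGraphZ]
  omega

lemma eq_or_pathGraphZ_adj_iff {i j : ℤ} : i = j ∨ pathGraphZ.Adj i j ↔ |j - i| ≤ 1 := by
  rw [pathGraphZ_adj_iff, abs_le]
  omega

lemma IsGraphHom.comp {U V W : Type*} {F : SimpleGraph U} {G : SimpleGraph V}
    {H : SimpleGraph W} {φ : V → W} {f : U → V} (hφ : IsGraphHom G H φ)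
    (hf : IsGraphHom F G f) : IsGraphHom F H (φ ∘ f) := by
  intro u v huv
  rcases hf huv with h | h
  · exact Or.inl (congrArg φ h)
  · exact hφ h

lemma isGraphHom_pathGraphZ_iff {V : Type*} {G : SimpleGraph V} {f : ℤ → V} :
    IsGraphHom pathGraphZ G f ↔ ∀ a, f a = f (a + 1) ∨ G.Adj (f a) (f (a + 1)) := by
  refine ⟨fun hf a => hf (pathGraphZ_adj_iff.2 (Or.inl rfl)), fun hf u v huv => ?_⟩
  rcases pathGraphZ_adj_iff.1 huv with rfl | rfl
  · exact hf u
  · exact (hf v).imp Eq.symm G.adj_symm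

lemma isGraphHom_pathGraphZ_pathGraphZ_iff {f : ℤ → ℤ} :
    IsGraphHom pathGraphZ pathGraphZ f ↔ ∀ a, |f (a + 1) - f a| ≤ 1 := by
  simp only [isGraphHom_pathGraphZ_iff, eq_or_pathGraphZ_adj_iff]

lemma IsGraphHom.of_slices {V : Type*} {G : SimpleGraph V} {H : ℤ × ℤ → V}
    (hrow : ∀ j, IsGraphHom pathGraphZ G fun a => H (a, j))
    (hcol : ∀ a, IsGraphHom pathGraphZ G fun j => H (a, j)) :
    IsGraphHom gridGraphZ G H := by
  rintro ⟨a, j⟩ ⟨b, k⟩ ⟨-, ⟨rfl, hjk⟩ | ⟨rfl, hab⟩⟩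
  · exact hcol a hjk
  · exact hrow j hab

lemma isGraphHom_intCast_cycleGraph (n : ℕ) :
    IsGraphHom pathGraphZ (cycleGraph n) (Int.cast : ℤ → ZMod n) := by
  refine isGraphHom_pathGraphZ_iff.2 fun a => ?_
  by_cases h : (a : ZMod n) = ((a + 1 : ℤ) : ZMod n)
  · exact Or.inl h
  · exact Or.inr ⟨h, Or.inr (by push_cast; rfl)⟩

lemma IsGraphHom.add_const {f : ℤ → ℤ} (hf : IsGraphHom pathGraphZ pathGraphZ f) (c : ℤ) :
    IsGraphHom pathGraphZ pathGraphZ fun a => f a + c := by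
  rw [isGraphHom_pathGraphZ_pathGraphZ_iff] at hf ⊢
  simpa only [add_sub_add_right_eq_sub] using hf

lemma comp_concatZ {V W : Type*} (φ : V → W) (f g : ℤ → V) (mf mg : ℤ) :
    φ ∘ concatZ f g mf mg = concatZ (φ ∘ f) (φ ∘ g) mf mg := by
  funext a
  simp only [Function.comp_apply, concatZ, apply_ite φ]

lemma IsGraphHom.concatZ {V : Type*} {G : SimpleGraph V} {f g : ℤ → V} {mf mg : ℤ}
    (hf : IsGraphHom pathGraphZ G f) (hg : IsGraphHom pathGraphZ G g)
    (hjoin : g (mg - 1) = f mf ∨ G.Adj (g (mg - 1)) (f mf)) :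
    IsGraphHom pathGraphZ G (concatZ f g mf mg) := by
  rw [isGraphHom_pathGraphZ_iff] at hf hg ⊢
  intro a
  unfold _root_.concatZ
  rcases lt_trichotomy a (-1) with ha | rfl | ha
  · rw [if_neg (by omega), if_neg (by omega), add_right_comm]
    exact hg (a + mg)
  · rw [if_neg (by omega), if_pos (by omega), neg_add_eq_sub, neg_add_cancel, zero_add]
    exact hjoin
  · rw [if_pos (by omega), if_pos (by omega), add_right_comm]
    exact hf (a + mf)

theorem AHomotopicZ.map {V W : Type*} {G : SimpleGraph V} {H : SimpleGraph W} {φ : V → W}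
    {f g : ℤ → V} (hφ : IsGraphHom G H φ) (hfg : AHomotopicZ G f g) :
    AHomotopicZ H (φ ∘ f) (φ ∘ g) := by
  obtain ⟨vneg, vpos, K, hK, ⟨m₁, h₁⟩, ⟨m₂, h₂⟩, ⟨m₃, h₃⟩, ⟨m₄, h₄⟩, ⟨m₅, h₅⟩, ⟨m₆, h₆⟩⟩ := hfg
  refine ⟨φ vneg, φ vpos, φ ∘ K, hφ.comp hK, ⟨m₁, fun i hi => ?_⟩, ⟨m₂, fun i hi => ?_⟩,
    ⟨m₃, fun a ha j => ?_⟩, ⟨m₄, fun a ha j => ?_⟩, ⟨m₅, fun j hj a => ?_⟩,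
    ⟨m₆, fun j hj a => ?_⟩⟩
  · simp only [Function.comp_apply, (h₁ i hi).1, (h₁ i hi).2, and_self]
  · simp only [Function.comp_apply, (h₂ i hi).1, (h₂ i hi).2, and_self]
  · simp only [Function.comp_apply, h₃ a ha j]
  · simp only [Function.comp_apply, h₄ a ha j]
  · simp only [Function.comp_apply, h₅ j hj a]
  · simp only [Function.comp_apply, h₆ j hj a]

lemma exists_forall_le_of_isStab {α : Type*} [LinearOrder α] {d : ℤ → α} {m₁ m₂ : ℤ}
    (h₁ : IsStabNegAt d m₁) (h₂ : IsStabPosAt d m₂) : ∃ B, ∀ a, d a ≤ B := by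
  have : Nonempty α := ⟨d 0⟩
  obtain ⟨B, hB⟩ := ((Set.finite_Icc m₁ (max m₁ m₂)).image d).bddAbove
  refine ⟨B, fun a => hB ?_⟩
  rcases le_or_gt a m₁ with ha | ha
  · exact ⟨m₁, ⟨le_rfl, le_max_left _ _⟩, (h₁ a ha).symm⟩
  rcases le_or_gt (max m₁ m₂) a with ha' | ha'
  · refine ⟨max m₁ m₂, ⟨le_max_left _ _, le_rfl⟩, ?_⟩
    rw [h₂ _ (le_max_right _ _), h₂ a (le_trans (le_max_right _ _) ha')]
  · exact ⟨a, ⟨ha.le, ha'.le⟩, rfl⟩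

def clampHomotopy (f g : ℤ → ℤ) (p : ℤ × ℤ) : ℤ :=
  max (min (g p.1) (f p.1 + max p.2 0)) (f p.1 - max p.2 0)

section clampHomotopy

variable {f g : ℤ → ℤ}

lemma clampHomotopy_of_nonpos {a j : ℤ} (hj : j ≤ 0) : clampHomotopy f g (a, j) = f a := by
  simp only [clampHomotopy]
  omega

lemma clampHomotopy_of_abs_sub_le {a j : ℤ} (hj : |f a - g a| ≤ j) :
    clampHomotopy f g (a, j) = g a := by
  rw [abs_le] at hj
  simp only [clampHomotopy]
  omega

lemma clampHomotopy_of_eq {a j : ℤ} (ha : f a = g a) : clampHomotopy f g (a, j) = f a := by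
  simp only [clampHomotopy]
  omega

lemma isGraphHom_clampHomotopy (hf : IsGraphHom pathGraphZ pathGraphZ f)
    (hg : IsGraphHom pathGraphZ pathGraphZ g) :
    IsGraphHom gridGraphZ pathGraphZ (clampHomotopy f g) := by
  rw [isGraphHom_pathGraphZ_pathGraphZ_iff] at hf hg
  refine IsGraphHom.of_slices (fun j => ?_) (fun a => ?_) <;>
    rw [isGraphHom_pathGraphZ_pathGraphZ_iff] <;> intro b
  · have hfb := abs_le.1 (hf b)
    have hgb := abs_le.1 (hg b)
    rw [abs_le]
    simp only [clampHomotopy]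
    omega
  · rw [abs_le]
    simp only [clampHomotopy]
    omega

end clampHomotopy

theorem aHomotopicZ_pathGraphZ {f g : ℤ → ℤ} (hf : IsGraphHom pathGraphZ pathGraphZ f)
    (hg : IsGraphHom pathGraphZ pathGraphZ g) {vneg vpos : ℤ}
    (hneg : ∃ m, ∀ i ≤ m, f i = vneg ∧ g i = vneg)
    (hpos : ∃ m, ∀ i, m ≤ i → f i = vpos ∧ g i = vpos) :
    AHomotopicZ pathGraphZ f g := by
  obtain ⟨m₁, h₁⟩ := hneg
  obtain ⟨m₂, h₂⟩ := hpos
  obtain ⟨B, hB⟩ := exists_forall_le_of_isStab (d := fun a => |f a - g a|) (m₁ := m₁) (m₂ := m₂)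
    (fun i hi => by simp only [(h₁ i hi).1, (h₁ i hi).2, (h₁ m₁ le_rfl).1, (h₁ m₁ le_rfl).2])
    (fun i hi => by simp only [(h₂ i hi).1, (h₂ i hi).2, (h₂ m₂ le_rfl).1, (h₂ m₂ le_rfl).2])
  refine ⟨vneg, vpos, clampHomotopy f g, isGraphHom_clampHomotopy hf hg, ⟨m₁, h₁⟩, ⟨m₂, h₂⟩,
    ⟨m₁, fun a ha j => ?_⟩, ⟨m₂, fun a ha j => ?_⟩,
    ⟨0, fun j hj a => clampHomotopy_of_nonpos hj⟩,
    ⟨B, fun j hj a => clampHomotopy_of_abs_sub_le ((hB a).trans hj)⟩⟩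
  · rw [clampHomotopy_of_eq ((h₁ a ha).1.trans (h₁ a ha).2.symm), (h₁ a ha).1]
  · rw [clampHomotopy_of_eq ((h₂ a ha).1.trans (h₂ a ha).2.symm), (h₂ a ha).1]

lemma intCast_five_mul (k : ℤ) : ((5 * k : ℤ) : ZMod 5) = 0 :=
  (ZMod.intCast_zmod_eq_zero_iff_dvd _ 5).2 (dvd_mul_right 5 k)

lemma gammaLift_of_nonpos (k : ℤ) {i : ℤ} (hi : i ≤ 0) : gammaLift k i = 0 :=
  if_pos hi

lemma gammaLift_of_le (k : ℤ) {i : ℤ} (hi : 5 * |k| ≤ i) : gammaLift k i = 5 * k := by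
  have := abs_choice k
  have := abs_nonneg k
  simp only [gammaLift]
  split_ifs <;> omega

lemma gammaLift_sub_one (k : ℤ) : |gammaLift k (5 * |k| - 1) - 5 * k| ≤ 1 := by
  have := abs_choice k
  have := abs_nonneg k
  rw [abs_le]
  simp only [gammaLift]
  split_ifs <;> omega

lemma isGraphHom_gammaLift (k : ℤ) : IsGraphHom pathGraphZ pathGraphZ (gammaLift k) := by
  rw [isGraphHom_pathGraphZ_pathGraphZ_iff]
  intro a
  have := abs_choice k
  have := abs_nonneg k
  rw [abs_le]
  simp only [gammaLift]
  split_ifs <;> omega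

lemma intCast_comp_gammaLift (k : ℤ) : (Int.cast : ℤ → ZMod 5) ∘ gammaLift k = gammaC5 k := by
  funext i
  simp only [Function.comp_apply, gammaLift, gammaC5]
  rcases le_or_gt 0 k with hk | hk
  · simp only [abs_of_nonneg hk, if_pos hk]
    split_ifs <;> simp only [Int.cast_zero, intCast_five_mul]
  · simp only [abs_of_neg hk, if_neg hk.not_ge, mul_neg]
    split_ifs <;> simp only [Int.cast_zero, intCast_five_mul]

def gammaConcatLift (n m : ℤ) : ℤ → ℤ :=
  concatZ (fun a => gammaLift n a + 5 * m) (gammaLift m) 0 (5 * |m|)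

lemma isGraphHom_gammaConcatLift (n m : ℤ) :
    IsGraphHom pathGraphZ pathGraphZ (gammaConcatLift n m) := by
  refine ((isGraphHom_gammaLift n).add_const _).concatZ (isGraphHom_gammaLift m) ?_
  rw [gammaLift_of_nonpos n le_rfl, zero_add, eq_or_pathGraphZ_adj_iff, abs_sub_comm]
  exact gammaLift_sub_one m

lemma gammaConcatLift_of_le (n m : ℤ) {i : ℤ} (hi : i ≤ -(5 * |m|) - 1) :
    gammaConcatLift n m i = 0 := by
  have := abs_nonneg m
  rw [gammaConcatLift, concatZ, if_neg (by omega), gammaLift_of_nonpos m (by omega)]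

lemma gammaConcatLift_of_ge (n m : ℤ) {i : ℤ} (hi : 5 * |n| ≤ i) :
    gammaConcatLift n m i = 5 * (n + m) := by
  have := abs_nonneg n
  rw [gammaConcatLift, concatZ, if_pos (by omega), add_zero, gammaLift_of_le n hi, mul_add]

lemma intCast_comp_gammaConcatLift (n m : ℤ) :
    (Int.cast : ℤ → ZMod 5) ∘ gammaConcatLift n m =
      concatZ (gammaC5 n) (gammaC5 m) 0 (5 * |m|) := by
  rw [gammaConcatLift, comp_concatZ, ← intCast_comp_gammaLift n, ← intCast_comp_gammaLift m]
  congr 1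
  funext a
  simp only [Function.comp_apply, Int.cast_add, intCast_five_mul, add_zero]

/-- For all integers `n`, `m`, the concatenation `γₙ · γₘ` is A-homotopic to
`γₙ₊ₘ` (here `m₀(γₙ,-1) = 0` and `m₀(γₘ,+1) = 5|m|`). -/
theorem gamma_concat (n m : ℤ) :
    AHomotopicZ C5 (concatZ (gammaC5 n) (gammaC5 m) 0 (5 * |m|))
      (gammaC5 (n + m)) := by
  have := abs_nonneg n
  have := abs_nonneg m
  have := abs_nonneg (n + m)
  have hneg : ∀ i ≤ -(5 * |m|) - 1, gammaConcatLift n m i = 0 ∧ gammaLift (n + m) i = 0 :=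
    fun i hi => ⟨gammaConcatLift_of_le n m hi, gammaLift_of_nonpos _ (by omega)⟩
  have hpos : ∀ i, 5 * |n| + 5 * |n + m| ≤ i →
      gammaConcatLift n m i = 5 * (n + m) ∧ gammaLift (n + m) i = 5 * (n + m) :=
    fun i hi => ⟨gammaConcatLift_of_ge n m (by omega), gammaLift_of_le _ (by omega)⟩
  rw [← intCast_comp_gammaConcatLift, ← intCast_comp_gammaLift]
  exact (aHomotopicZ_pathGraphZ (isGraphHom_gammaConcatLift n m) (isGraphHom_gammaLift _)
    ⟨_, hneg⟩ ⟨_, hpos⟩).map (isGraphHom_intCast_cycleGraph 5)
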